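/- arXiv:2102.01124 — 5 statements merged into one kernel-verified Lean document; each statement's English description precedes it below -/
import Mathlib

section
/- Every graph G on at least 3 vertices that is disconnected, bipartite, and has edges in at most one connected component admits a valid 3-role coloring. In particular, every disconnected bipartite chain graph on at least 3 vertices admits a 3-role coloring. -/
/-! Without edges every surjection is a role coloring, since all neighbourhoods are empty.
Otherwise colour every isolated vertex 2 and every other vertex by its side of a bipartition:
a non-isolated vertex on side `c` sees exactly the colour `1 - c`, and both sides as well as an
isolated vertex occur, the latter because all edges lie in one component of a disconnected graph. -/

def IsRoleColoring {V C : Type*} (G : SimpleGraph V) (α : V → C) : Prop :=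
  Function.Surjective α ∧
    ∀ u v : V, α u = α v → α '' (G.neighborSet u) = α '' (G.neighborSet v)

namespace SimpleGraph

variable {V : Type*} {G : SimpleGraph V}

theorem isRoleColoring_bot_iff {C : Type*} {α : V → C} :
    IsRoleColoring (⊥ : SimpleGraph V) α ↔ Function.Surjective α := by
  simp [IsRoleColoring]

theorem exists_isIsolated_of_not_connected (hdisc : ¬ G.Connected)
    (hone : ∀ u v u' v' : V, G.Adj u v → G.Adj u' v' → G.Reachable u u') {u v : V}
    (huv : G.Adj u v) : ∃ z, G.IsIsolated z := by
  rw [connected_iff_exists_forall_reachable, not_exists] at hdisc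
  obtain ⟨z, hz⟩ := not_forall.mp (hdisc u)
  exact ⟨z, fun w hzw => hz (hone u v z w huv hzw)⟩

theorem Coloring.eq_add_one_of_adj (C : G.Coloring (Fin 2)) {v w : V} (h : G.Adj v w) :
    C w = C v + 1 := by
  have hne : C v ≠ C w := C.valid h
  fin_omega

open Classical in
noncomputable def Coloring.sideOrIsolated (C : G.Coloring (Fin 2)) (v : V) : Fin 3 :=
  if G.IsIsolated v then Fin.last 2 else (C v).castSucc

theorem Coloring.image_sideOrIsolated_neighborSet (C : G.Coloring (Fin 2)) {v : V}
    (hv : ¬ G.IsIsolated v) :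
    C.sideOrIsolated '' G.neighborSet v = {(C v + 1).castSucc} := by
  have hconst : Set.EqOn C.sideOrIsolated (fun _ => (C v + 1).castSucc) (G.neighborSet v) :=
    fun w (hvw : G.Adj v w) => by
      simp [sideOrIsolated, hvw.not_isIsolated_right, C.eq_add_one_of_adj hvw]
  rw [hconst.image_eq, Set.Nonempty.image_const (by simpa using hv)]

theorem Coloring.sideOrIsolated_eq_last_iff (C : G.Coloring (Fin 2)) {v : V} :
    C.sideOrIsolated v = Fin.last 2 ↔ G.IsIsolated v := by
  unfold sideOrIsolated
  split_ifs with hv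
  · exact iff_of_true rfl hv
  · exact iff_of_false (Fin.castSucc_ne_last _) hv

theorem Coloring.isRoleColoring_sideOrIsolated (C : G.Coloring (Fin 2)) {u v z : V}
    (huv : G.Adj u v) (hz : G.IsIsolated z) : IsRoleColoring G C.sideOrIsolated := by
  constructor
  · intro c
    induction c using Fin.lastCases with
    | last => exact ⟨z, C.sideOrIsolated_eq_last_iff.mpr hz⟩
    | cast c =>
      have hc : C u = c ∨ C v = c := by
        have hvu := C.eq_add_one_of_adj huv
        fin_omega
      rcases hc with hc | hc
      · exact ⟨u, by simp [sideOrIsolated, huv.not_isIsolated_left, hc]⟩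
      · exact ⟨v, by simp [sideOrIsolated, huv.not_isIsolated_right, hc]⟩
  · intro x y hxy
    by_cases hx : G.IsIsolated x
    · have hy : G.IsIsolated y := by
        rwa [← C.sideOrIsolated_eq_last_iff, ← hxy, C.sideOrIsolated_eq_last_iff]
      simp [hx, hy]
    · have hy : ¬ G.IsIsolated y := by
        rwa [← C.sideOrIsolated_eq_last_iff, ← hxy, C.sideOrIsolated_eq_last_iff]
      simp only [sideOrIsolated, hx, hy, if_false, Fin.castSucc_inj] at hxy
      rw [C.image_sideOrIsolated_neighborSet hx, C.image_sideOrIsolated_neighborSet hy, hxy]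

end SimpleGraph

/-- Every graph on at least 3 vertices that is disconnected, bipartite, and has
edges in at most one connected component admits a valid 3-role coloring. -/
theorem disconnected_bipartite_three_role {V : Type*} [Fintype V] (G : SimpleGraph V)
    (hcard : 3 ≤ Fintype.card V) (hdisc : ¬ G.Connected) (hbip : G.Colorable 2)
    (hone : ∀ u v u' v' : V, G.Adj u v → G.Adj u' v' → G.Reachable u u') :
    ∃ α : V → Fin 3, IsRoleColoring G α := by
  obtain ⟨C⟩ := hbip
  by_cases hG : G = ⊥
  · subst hG
    obtain ⟨e⟩ := Function.Embedding.nonempty_of_card_le (α := Fin 3) (by simpa using hcard)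
    exact ⟨Function.invFun e, SimpleGraph.isRoleColoring_bot_iff.mpr
      (Function.invFun_surjective e.injective)⟩
  · obtain ⟨u, v, huv⟩ := SimpleGraph.ne_bot_iff_exists_adj.mp hG
    obtain ⟨z, hz⟩ := SimpleGraph.exists_isIsolated_of_not_connected hdisc hone huv
    exact ⟨_, C.isRoleColoring_sideOrIsolated huv hz⟩
end

section
/- Let G' be obtained from a connected bipartite graph G = (Q, S, E) by attaching to each vertex q ∈ Q a pendant path of two vertices b_q, a_q (edges (q, b_q) and (b_q, a_q)). In any valid 3-role coloring α of G', for every q ∈ Q, the three vertices a_q, b_q, q receive three pairwise distinct colors. -/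
theorem SimpleGraph.Connected.forall_of_adj {V : Type*} {G : SimpleGraph V} (hG : G.Connected)
    {P : V → Prop} {u : V} (hu : P u) (hP : ∀ v w, G.Adj v w → P v → P w) (v : V) : P v := by
  induction (G.reachable_iff_reflTransGen u v).1 (hG u v) with
  | refl => exact hu
  | tail _ hadj ih => exact hP _ _ hadj ih

/-- One representative per color suffices: in a role coloring all vertices of a color see the
same neighbor colors. -/
theorem IsRoleColoring.eq_univ_of_neighbor_colors_subset {V C : Type*} {G : SimpleGraph V}
    {α : V → C} (h : IsRoleColoring G α) (hG : G.Connected) {S : Set C} (hne : S.Nonempty)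
    (hS : ∀ c ∈ S, ∃ v, α v = c ∧ α '' G.neighborSet v ⊆ S) : S = Set.univ := by
  obtain ⟨c, hc⟩ := hne
  obtain ⟨u, rfl, -⟩ := hS c hc
  have hall : ∀ v, α v ∈ S := hG.forall_of_adj (P := fun v => α v ∈ S) hc fun v w hvw hv => by
    obtain ⟨x, hx, hxS⟩ := hS _ hv
    exact hxS (h.2 x v hx ▸ ⟨w, hvw, rfl⟩)
  exact Set.eq_univ_of_forall fun c => (h.1 c).elim fun v hv => hv ▸ hall v

/-- Let `G'` be a connected graph containing a pendant path `a — b — q`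
(`a` has degree 1 with unique neighbor `b`, and `b` has exactly the two
neighbors `a` and `q`). In any valid 3-role coloring `α` of `G'`, the three
vertices `a`, `b`, `q` receive pairwise distinct colors. -/
theorem pendant_path_distinct_colors {V : Type*} (G' : SimpleGraph V)
    (hconn : G'.Connected) (q b a : V)
    (ha : G'.neighborSet a = {b}) (hb : G'.neighborSet b = {a, q})
    (α : V → Fin 3) (h : IsRoleColoring G' α) :
    α a ≠ α b ∧ α b ≠ α q ∧ α a ≠ α q := by
  have hNa : α '' G'.neighborSet a = {α b} := by simp [ha]
  have hNb : α '' G'.neighborSet b = {α a, α q} := by simp [hb, Set.image_insert_eq]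
  suffices ¬ (α a = α b ∨ α q = α a ∨ α q = α b) by omega
  intro hdeg
  have hab_univ : ({α a, α b} : Set (Fin 3)) = Set.univ := by
    refine h.eq_univ_of_neighbor_colors_subset hconn (by simp) ?_
    rintro c (rfl | rfl)
    · exact ⟨a, rfl, by simp [hNa]⟩
    · refine ⟨b, rfl, ?_⟩
      rcases hdeg with hab | hqa | hqb
      · simp [← h.2 a b hab, hNa]
      · simp [hNb, hqa]
      · simp [hNb, hqb]
  obtain ⟨z, hza, hzb⟩ : ∃ z : Fin 3, z ≠ α a ∧ z ≠ α b := by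
    generalize α a = x; generalize α b = y; revert x y; decide
  have hz : z ∈ ({α a, α b} : Set (Fin 3)) := hab_univ ▸ Set.mem_univ z
  simp [hza, hzb] at hz
end

section
/- Let G' be a connected graph obtained from a bipartite graph G = (Q, S, E) (with every s ∈ S having at least one neighbor in Q) by attaching a pendant vertex p^s to each s ∈ S. In any valid 4-role coloring α of G', no vertex of S receives the same color as any vertex of Q, i.e., α(S) ∩ α(Q) = ∅. -/
/-!
Suppose `α q = α s` with `q ∈ Q`, `s ∈ S`, and let `p` be the pendant vertex at `s`. Since
`α p` occurs on `N(s)`, it occurs on `N(q) ⊆ S`, say at `s'`. A vertex coloured like a pendant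
vertex sees only the colour of its attachment point, so `N(s')` sees only `α s`; in particular
the pendant `p'` at `s'` has colour `α s`, and vertices coloured `α s` see only `α s' = α p`.
Thus `{α p, α s}` is closed under adjacency, so by connectivity `α` uses only two colours,
contradicting surjectivity onto four.
-/

lemma SimpleGraph.Connected.mem_of_adj_closed {V : Type*} {G : SimpleGraph V} (hG : G.Connected)
    {T : Set V} (hT : ∀ ⦃v w⦄, G.Adj v w → v ∈ T → w ∈ T) {u : V} (hu : u ∈ T) (v : V) :
    v ∈ T := by
  induction (G.reachable_iff_reflTransGen u v).1 (hG u v) with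
  | refl => exact hu
  | tail _ hadj ih => exact hT hadj ih

lemma IsRoleColoring.eq_of_adj_of_neighborSet_eq_singleton {V C : Type*} {G : SimpleGraph V}
    {α : V → C} (h : IsRoleColoring G α) {p s u w : V} (hp : G.neighborSet p = {s})
    (hu : α u = α p) (huw : G.Adj u w) : α w = α s := by
  have hw : α w ∈ α '' G.neighborSet p := h.2 u p hu ▸ Set.mem_image_of_mem α huw
  rwa [hp, Set.image_singleton] at hw

lemma SimpleGraph.adj_of_neighborSet_eq_singleton {V : Type*} {G : SimpleGraph V} {p s : V}
    (hp : G.neighborSet p = {s}) : G.Adj s p :=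
  (G.mem_neighborSet p s).1 (hp ▸ rfl) |>.symm

lemma Fin.exists_ne_ne_of_three_le {n : ℕ} (hn : 3 ≤ n) (a b : Fin n) : ∃ c, c ≠ a ∧ c ≠ b := by
  by_contra! hab
  have : (Finset.univ : Finset (Fin n)) ⊆ {a, b} := fun c _ => by
    by_cases hc : c = a
    · simp [hc]
    · simp [hab c hc]
  have := (Finset.card_le_card this).trans Finset.card_le_two
  simp only [Finset.card_univ, Fintype.card_fin] at this
  omega

theorem four_role_S_Q_disjoint_general {V : Type*} (G' : SimpleGraph V)
    (hconn : G'.Connected) (Q S P : Set V)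
    (hQ : ∀ q ∈ Q, G'.neighborSet q ⊆ S)
    (hSpend : ∀ s ∈ S, ∃ p ∈ P, G'.neighborSet p = {s})
    (α : V → Fin 4) (h : IsRoleColoring G' α) :
    ∀ q ∈ Q, ∀ s ∈ S, α q ≠ α s := by
  intro q hq s hs hqs
  obtain ⟨p, -, hp⟩ := hSpend s hs
  obtain ⟨s', hqs', hs'p⟩ : α p ∈ α '' G'.neighborSet q :=
    h.2 q s hqs ▸ Set.mem_image_of_mem α (G'.adj_of_neighborSet_eq_singleton hp)
  obtain ⟨p', -, hp'⟩ := hSpend s' (hQ q hq hqs')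
  have hp's : α p' = α s :=
    h.eq_of_adj_of_neighborSet_eq_singleton hp hs'p (G'.adj_of_neighborSet_eq_singleton hp')
  have hclosed : ∀ ⦃v w⦄, G'.Adj v w → α v ∈ ({α p, α s} : Set (Fin 4)) →
      α w ∈ ({α p, α s} : Set (Fin 4)) := by
    rintro v w hvw (hv | hv)
    · exact .inr (h.eq_of_adj_of_neighborSet_eq_singleton hp hv hvw)
    · exact .inl (hs'p ▸ h.eq_of_adj_of_neighborSet_eq_singleton hp' (hv.trans hp's.symm) hvw)
  obtain ⟨c, hcp, hcs⟩ := Fin.exists_ne_ne_of_three_le (by norm_num) (α p) (α s)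
  obtain ⟨v, rfl⟩ := h.1 c
  rcases hconn.mem_of_adj_closed (T := α ⁻¹' {α p, α s}) hclosed (.inl rfl) v with hv | hv
  exacts [hcp hv, hcs hv]

/-- Let `G'` be a connected graph obtained from the incidence graph of a 3-uniform
hypergraph (parts `Q` and `S`, every `s ∈ S` having exactly 3 neighbors in `Q`)
by attaching a pendant vertex to each `s ∈ S`. In any valid 4-role coloring `α`
of `G'`, no vertex of `S` receives the same color as any vertex of `Q`. -/
theorem four_role_S_Q_disjoint {V : Type*} [Fintype V] (G' : SimpleGraph V)
    (hconn : G'.Connected) (Q S P : Set V)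
    (hpart : ∀ v : V, (v ∈ Q ∧ v ∉ S ∧ v ∉ P) ∨ (v ∉ Q ∧ v ∈ S ∧ v ∉ P) ∨
      (v ∉ Q ∧ v ∉ S ∧ v ∈ P))
    (hQ : ∀ q ∈ Q, G'.neighborSet q ⊆ S)
    (hS3 : ∀ s ∈ S, (G'.neighborSet s ∩ Q).ncard = 3)
    (hSpend : ∀ s ∈ S, ∃ p ∈ P, G'.neighborSet p = {s})
    (hP : ∀ p ∈ P, ∃ s ∈ S, G'.neighborSet p = {s})
    (α : V → Fin 4) (h : IsRoleColoring G' α) :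
    ∀ q ∈ Q, ∀ s ∈ S, α q ≠ α s :=
  four_role_S_Q_disjoint_general G' hconn Q S P hQ hSpend α h
end

section
/- Let G'' be a connected graph obtained from a bipartite graph by attaching to each vertex s in one part a pendant path p^s_1 — p^s_2 — ... — p^s_{k-3} — s of k-3 new vertices. In any valid k-role coloring α of G'', for each such path the vertices p^s_1, ..., p^s_{k-3} receive pairwise distinct colors. -/
namespace SimpleGraph

variable {V : Type*} {G : SimpleGraph V}

theorem Reachable.of_adj_closed {P : V → Prop} (hP : ∀ u v, G.Adj u v → P u → P v)
    {u w : V} (huw : G.Reachable u w) (hu : P u) : P w := by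
  rw [reachable_iff_reflTransGen] at huw
  induction huw with
  | refl => exact hu
  | tail _ hadj ih => exact hP _ _ hadj ih

theorem neighborSet_pendant_path_subset {p : ℕ → V} {n : ℕ}
    (h0 : G.neighborSet (p 0) = {p 1})
    (hmid : ∀ i : ℕ, 0 < i → i < n → G.neighborSet (p i) = {p (i - 1), p (i + 1)})
    {m : ℕ} (hm : m < n) : G.neighborSet (p m) ⊆ p '' Set.Iic (m + 1) := by
  rcases Nat.eq_zero_or_pos m with rfl | hpos
  · rw [h0]
    exact Set.singleton_subset_iff.mpr ⟨1, Set.mem_Iic.mpr le_rfl, rfl⟩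
  · rw [hmid m hpos hm]
    exact Set.insert_subset ⟨m - 1, by simp only [Set.mem_Iic]; omega, rfl⟩
      (Set.singleton_subset_iff.mpr ⟨m + 1, Set.mem_Iic.mpr le_rfl, rfl⟩)

end SimpleGraph

namespace IsRoleColoring

variable {V C : Type*} {G : SimpleGraph V} {α : V → C}

theorem eq_univ_of_closed (h : IsRoleColoring G α) (hG : G.Preconnected) {S : Set C}
    (hS : ∀ c ∈ S, ∃ v, α v = c ∧ α '' G.neighborSet v ⊆ S) (hne : S.Nonempty) :
    S = Set.univ := by
  obtain ⟨c, hc⟩ := hne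
  obtain ⟨v₀, hv₀, -⟩ := hS c hc
  have hclosed : ∀ u v, G.Adj u v → α u ∈ S → α v ∈ S := by
    intro u v huv hu
    obtain ⟨w, hwu, hw⟩ := hS _ hu
    exact hw (h.2 w u hwu ▸ ⟨v, huv, rfl⟩)
  refine Set.eq_univ_of_forall fun d => ?_
  obtain ⟨w, rfl⟩ := h.1 d
  exact (hG v₀ w).of_adj_closed hclosed (hv₀ ▸ hc)

theorem card_le_of_pendant_path_color_eq (h : IsRoleColoring G α) (hG : G.Preconnected)
    {p : ℕ → V} {n : ℕ} (h0 : G.neighborSet (p 0) = {p 1})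
    (hmid : ∀ i : ℕ, 0 < i → i < n → G.neighborSet (p i) = {p (i - 1), p (i + 1)})
    {i j : ℕ} (hij : i < j) (hjn : j ≤ n) (hc : α (p i) = α (p j)) :
    Nat.card C ≤ j := by
  have hprefix : Set.range (fun m : Fin j => α (p m)) = Set.univ := by
    refine h.eq_univ_of_closed hG (fun c ⟨m, hm⟩ => ⟨p m, hm, ?_⟩) ⟨α (p i), ⟨i, hij⟩, rfl⟩
    rintro _ ⟨_, hv, rfl⟩
    obtain ⟨l, hl, rfl⟩ := SimpleGraph.neighborSet_pendant_path_subset h0 hmid (by omega) hv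
    by_cases hlj : l < j
    · exact ⟨⟨l, hlj⟩, rfl⟩
    · obtain rfl : l = j := by have := Set.mem_Iic.mp hl; omega
      exact ⟨⟨i, hij⟩, hc⟩
  simpa using Nat.card_le_card_of_surjective _ (Set.range_eq_univ.mp hprefix)

end IsRoleColoring

theorem pendant_path_injective_colors_general {V : Type*} (k : ℕ)
    (G'' : SimpleGraph V) (hconn : G''.Connected) (p : ℕ → V)
    (h0 : G''.neighborSet (p 0) = {p 1})
    (hmid : ∀ i : ℕ, 0 < i → i < k - 4 →
      G''.neighborSet (p i) = {p (i - 1), p (i + 1)})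
    (α : V → Fin k) (h : IsRoleColoring G'' α) :
    ∀ i j : ℕ, i < k - 3 → j < k - 3 → α (p i) = α (p j) → i = j := by
  have hne : ∀ i j, i < j → j < k - 3 → α (p i) ≠ α (p j) := fun i j hij hj hc => by
    have := h.card_le_of_pendant_path_color_eq hconn.preconnected h0 hmid hij
      (by omega : j ≤ k - 4) hc
    rw [Nat.card_fin] at this
    omega
  intro i j hi hj hc
  by_contra hij
  rcases Nat.lt_or_gt_of_ne hij with hlt | hgt
  · exact hne i j hlt hj hc
  · exact hne j i hgt hi hc.symm

/-- Let `k ≥ 5` and let `G''` be a connected graph containing an induced pendant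
path `p 0 — p 1 — ⋯ — p (k-4) — s` on `k - 3` new vertices attached to `s`.
In any valid `k`-role coloring `α` of `G''`, the vertices `p 0, …, p (k-4)`
receive pairwise distinct colors. -/
theorem pendant_path_injective_colors {V : Type*} (k : ℕ) (hk : 5 ≤ k)
    (G'' : SimpleGraph V) (hconn : G''.Connected) (s : V) (p : ℕ → V)
    (h0 : G''.neighborSet (p 0) = {p 1})
    (hmid : ∀ i : ℕ, 0 < i → i < k - 4 →
      G''.neighborSet (p i) = {p (i - 1), p (i + 1)})
    (hlast : G''.neighborSet (p (k - 4)) = {p (k - 5), s})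
    (α : V → Fin k) (h : IsRoleColoring G'' α) :
    ∀ i j : ℕ, i < k - 3 → j < k - 3 → α (p i) = α (p j) → i = j :=
  pendant_path_injective_colors_general k G'' hconn p h0 hmid α h
end

section
/- If a 3-uniform hypergraph H = (Q_H, S_H) with connected incidence graph admits a proper 2-coloring (no hyperedge monochromatic), then the graph G' obtained from the incidence graph G = (Q, S, E) by attaching to each q ∈ Q a pendant path q — b_q — a_q admits a valid 3-role coloring. -/
/-- Vertex set of the graph `G'`: hypergraph vertices `Q`, hyperedges `S_H`,
and for each `q ∈ Q` the two pendant-path vertices `b_q` and `a_q`. -/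
def W16 (Q : Type*) (SH : Finset (Finset Q)) : Type _ :=
  (Q ⊕ {e // e ∈ SH}) ⊕ (Q ⊕ Q)

/-- Base adjacency for `G'`: `q — s` when `q ∈ s`, the pendant-path edges
`q — b_q` and `b_q — a_q`. -/
def rel16 {Q : Type*} (SH : Finset (Finset Q)) : W16 Q SH → W16 Q SH → Prop
  | .inl (.inl q), .inl (.inr s) => q ∈ s.val
  | .inl (.inl q), .inr (.inl q') => q = q'
  | .inr (.inl q), .inr (.inr q') => q = q'
  | _, _ => False

/-- The graph `G'` obtained from the incidence graph of the hypergraph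
`(Q, SH)` by attaching to each `q ∈ Q` a pendant path `q — b_q — a_q`. -/
def G16 {Q : Type*} (SH : Finset (Finset Q)) : SimpleGraph (W16 Q SH) :=
  SimpleGraph.fromRel (rel16 SH)

theorem isRoleColoring_of_image_neighborSet_eq {V C : Type*} {G : SimpleGraph V} {α : V → C}
    (hsurj : Function.Surjective α) (R : C → Set C)
    (himage : ∀ v, α '' G.neighborSet v = R (α v)) : IsRoleColoring G α :=
  ⟨hsurj, fun u v h => by rw [himage u, himage v, h]⟩

theorem Fin.two_eq_or_eq_of_ne {a b : Fin 2} (hab : a ≠ b) (c : Fin 2) : c = a ∨ c = b := by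
  revert a b c; decide

theorem G16_adj {Q : Type*} {SH : Finset (Finset Q)} {u v : W16 Q SH} :
    (G16 SH).Adj u v ↔ u ≠ v ∧ (rel16 SH u v ∨ rel16 SH v u) :=
  SimpleGraph.fromRel_adj _ u v

namespace W16

variable {Q : Type*} {SH : Finset (Finset Q)}

def vertex (q : Q) : W16 Q SH := .inl (.inl q)

def hyperedge (s : {e // e ∈ SH}) : W16 Q SH := .inl (.inr s)

/-- The vertex `b_q`. -/
def mid (q : Q) : W16 Q SH := .inr (.inl q)

/-- The vertex `a_q`. -/
def tip (q : Q) : W16 Q SH := .inr (.inr q)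

@[elab_as_elim]
theorem ind {motive : W16 Q SH → Prop} (vertex : ∀ q, motive (vertex q))
    (hyperedge : ∀ s, motive (hyperedge s)) (mid : ∀ q, motive (mid q))
    (tip : ∀ q, motive (tip q)) (v : W16 Q SH) : motive v := by
  rcases v with ((q | s) | (q | q))
  exacts [vertex q, hyperedge s, mid q, tip q]

theorem adj_vertex_mid (q : Q) : (G16 SH).Adj (vertex q) (mid q) :=
  G16_adj.2 ⟨nofun, .inl rfl⟩

theorem adj_mid_tip (q : Q) : (G16 SH).Adj (mid (SH := SH) q) (tip q) :=
  G16_adj.2 ⟨nofun, .inl rfl⟩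

theorem adj_hyperedge_vertex {s : {e // e ∈ SH}} {q : Q} (hq : q ∈ s.val) :
    (G16 SH).Adj (hyperedge s) (vertex q) :=
  G16_adj.2 ⟨nofun, .inr hq⟩

theorem nonempty_of_forall_nonempty [Nonempty (W16 Q SH)] (hSH : ∀ e ∈ SH, e.Nonempty) :
    Nonempty Q := by
  obtain ⟨v⟩ := ‹Nonempty (W16 Q SH)›
  induction v using ind with
  | hyperedge s => exact (hSH s.val s.property).to_subtype.map Subtype.val
  | vertex q | mid q | tip q => exact ⟨q⟩

/-- The colouring `α` of the paper, with colour `3` encoded as `Fin.last 2` and colours `1, 2`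
as `Fin.castSucc` of `Fin 2`. -/
def roleColoring (β : Q → Fin 2) : W16 Q SH → Fin 3
  | .inl (.inl q) => (β q).castSucc
  | .inl (.inr _) => Fin.last 2
  | .inr (.inl _) => Fin.last 2
  | .inr (.inr q) => (β q + 1).castSucc

variable (β : Q → Fin 2)

theorem roleColoring_surjective [Nonempty Q] :
    Function.Surjective (roleColoring (SH := SH) β) := by
  obtain ⟨q⟩ := ‹Nonempty Q›
  intro c
  rcases c.eq_castSucc_or_eq_last with ⟨b, rfl⟩ | rfl
  · rcases Fin.two_eq_or_eq_of_ne (a := β q) (add_ne_left.2 one_ne_zero).symm b with rfl | rfl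
    exacts [⟨vertex q, rfl⟩, ⟨tip q, rfl⟩]
  · exact ⟨mid q, rfl⟩

theorem roleColoring_eq_last_iff_of_adj {u v : W16 Q SH} (huv : (G16 SH).Adj u v) :
    roleColoring β u = Fin.last 2 ↔ roleColoring β v ≠ Fin.last 2 := by
  rw [G16_adj] at huv
  rcases u with ((_ | _) | (_ | _)) <;> rcases v with ((_ | _) | (_ | _)) <;>
    simp only [rel16, roleColoring, ne_eq, Fin.castSucc_ne_last, not_true_eq_false,
      not_false_eq_true, or_false, false_or, and_false] at huv ⊢

theorem exists_adj_roleColoring_eq_last {v : W16 Q SH} (hv : roleColoring β v ≠ Fin.last 2) :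
    ∃ w, (G16 SH).Adj v w ∧ roleColoring β w = Fin.last 2 := by
  induction v using ind with
  | vertex q => exact ⟨mid q, adj_vertex_mid q, rfl⟩
  | tip q => exact ⟨mid q, (adj_mid_tip q).symm, rfl⟩
  | hyperedge s | mid q => exact absurd rfl hv

theorem exists_adj_roleColoring_eq_castSucc
    (hβ : ∀ e ∈ SH, ∃ q₁ ∈ e, ∃ q₂ ∈ e, β q₁ ≠ β q₂)
    {v : W16 Q SH} (hv : roleColoring β v = Fin.last 2) (b : Fin 2) :
    ∃ w, (G16 SH).Adj v w ∧ roleColoring β w = b.castSucc := by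
  induction v using ind with
  | hyperedge s =>
    obtain ⟨q₁, hq₁, q₂, hq₂, hne⟩ := hβ s.val s.property
    rcases Fin.two_eq_or_eq_of_ne hne b with rfl | rfl
    exacts [⟨vertex q₁, adj_hyperedge_vertex hq₁, rfl⟩,
      ⟨vertex q₂, adj_hyperedge_vertex hq₂, rfl⟩]
  | mid q =>
    rcases Fin.two_eq_or_eq_of_ne (a := β q) (add_ne_left.2 one_ne_zero).symm b with rfl | rfl
    exacts [⟨vertex q, (adj_vertex_mid q).symm, rfl⟩, ⟨tip q, adj_mid_tip q, rfl⟩]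
  | vertex q | tip q => exact absurd hv (Fin.castSucc_ne_last _)

theorem image_neighborSet_roleColoring (hβ : ∀ e ∈ SH, ∃ q₁ ∈ e, ∃ q₂ ∈ e, β q₁ ≠ β q₂)
    (v : W16 Q SH) : roleColoring β '' (G16 SH).neighborSet v =
      {c | c = Fin.last 2 ↔ roleColoring β v ≠ Fin.last 2} := by
  ext c
  constructor
  · rintro ⟨w, hw, rfl⟩
    exact roleColoring_eq_last_iff_of_adj β hw.symm
  · intro hc
    by_cases hv : roleColoring β v = Fin.last 2
    · obtain ⟨b, rfl⟩ | rfl := c.eq_castSucc_or_eq_last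
      · exact exists_adj_roleColoring_eq_castSucc β hβ hv b
      · exact (hc.1 rfl hv).elim
    · exact hc.2 hv ▸ exists_adj_roleColoring_eq_last β hv

end W16

theorem hypergraph_two_coloring_three_role_general {Q : Type*}
    (SH : Finset (Finset Q))
    (hconn : (G16 SH).Connected)
    (hcol : ∃ β : Q → Fin 2, ∀ e ∈ SH, ∃ q₁ ∈ e, ∃ q₂ ∈ e, β q₁ ≠ β q₂) :
    ∃ α : W16 Q SH → Fin 3, IsRoleColoring (G16 SH) α := by
  obtain ⟨β, hβ⟩ := hcol
  have : Nonempty (W16 Q SH) := hconn.nonempty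
  have : Nonempty Q := W16.nonempty_of_forall_nonempty fun e he =>
    let ⟨q, hq, _⟩ := hβ e he
    ⟨q, hq⟩
  exact ⟨W16.roleColoring β, isRoleColoring_of_image_neighborSet_eq
    (W16.roleColoring_surjective β) (fun a => {c | c = Fin.last 2 ↔ a ≠ Fin.last 2})
    (W16.image_neighborSet_roleColoring β hβ)⟩

/-- If a 3-uniform hypergraph with connected incidence graph admits a proper
2-coloring (no hyperedge monochromatic), then the graph `G'` obtained from the
incidence graph by attaching a pendant path `q — b_q — a_q` to each vertex `q`
admits a valid 3-role coloring. -/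
theorem hypergraph_two_coloring_three_role {Q : Type*} [Fintype Q] [DecidableEq Q]
    (SH : Finset (Finset Q)) (huniform : ∀ e ∈ SH, e.card = 3)
    (hconn : (G16 SH).Connected)
    (hcol : ∃ β : Q → Fin 2, ∀ e ∈ SH, ∃ q₁ ∈ e, ∃ q₂ ∈ e, β q₁ ≠ β q₂) :
    ∃ α : W16 Q SH → Fin 3, IsRoleColoring (G16 SH) α :=
  hypergraph_two_coloring_three_role_general SH hconn hcol
end
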